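/- arXiv:2512.01887 — 3 statements merged into one kernel-verified Lean document; each statement's English description precedes it below -/
import Mathlib

section
/- Let S be an n_s×n_s real matrix, G an n_g×n_g real matrix, F an n_f×n_f real matrix, and let C1 be an n_Γ×n_f, C2 an n_Γ×n_s, C3 an n_f×n_Γ, C5 an n_g×n_s, and D an n_f×n_g real matrix. Define the 4×4 block matrices B_S = [[S,0,0,0],[0,I,0,0],[0,0,I,0],[0,0,0,I]], B_G = [[I,0,0,0],[C5,G,0,0],[0,0,I,0],[0,0,0,I]], and B_F = [[I,0,0,0],[0,I,0,0],[0,D,F,C3],[C2,0,C1,0]] (identity blocks of the matching sizes). Then the product B_S · B_G · B_F equals the 4×4 block matrix [[S,0,0,0],[C5,G,0,0],[0,D,F,C3],[C2,0,C1,0]]; in other words, the FaCSI factorization reproduces the FSI Jacobian [[S,0,0,C4],[C5,G,0,0],[0,D,F,C3],[C2,0,C1,0]] exactly except that the coupling block C4 is replaced by zero. -/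
open Matrix

/-- The FaCSI factorization `B_S · B_G · B_F` reproduces the FSI Jacobian
`[[S,0,0,C4],[C5,G,0,0],[0,D,F,C3],[C2,0,C1,0]]` exactly, except that the
coupling block `C4` is replaced by zero. -/
theorem facsi_factorization_product
    (ns ng nf nΓ : ℕ)
    (S : Matrix (Fin ns) (Fin ns) ℝ)
    (G : Matrix (Fin ng) (Fin ng) ℝ)
    (F : Matrix (Fin nf) (Fin nf) ℝ)
    (C1 : Matrix (Fin nΓ) (Fin nf) ℝ)
    (C2 : Matrix (Fin nΓ) (Fin ns) ℝ)
    (C3 : Matrix (Fin nf) (Fin nΓ) ℝ)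
    (C5 : Matrix (Fin ng) (Fin ns) ℝ)
    (D : Matrix (Fin nf) (Fin ng) ℝ) :
    -- B_S = [[S,0,0,0],[0,I,0,0],[0,0,I,0],[0,0,0,I]]
    (Matrix.fromBlocks (Matrix.fromBlocks S 0 0 1) 0 0
        (1 : Matrix (Fin nf ⊕ Fin nΓ) (Fin nf ⊕ Fin nΓ) ℝ)) *
    -- B_G = [[I,0,0,0],[C5,G,0,0],[0,0,I,0],[0,0,0,I]]
    (Matrix.fromBlocks (Matrix.fromBlocks 1 0 C5 G) 0 0
        (1 : Matrix (Fin nf ⊕ Fin nΓ) (Fin nf ⊕ Fin nΓ) ℝ)) *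
    -- B_F = [[I,0,0,0],[0,I,0,0],[0,D,F,C3],[C2,0,C1,0]]
    (Matrix.fromBlocks (1 : Matrix (Fin ns ⊕ Fin ng) (Fin ns ⊕ Fin ng) ℝ) 0
        (Matrix.fromBlocks 0 D C2 0) (Matrix.fromBlocks F C3 C1 0)) =
    -- [[S,0,0,0],[C5,G,0,0],[0,D,F,C3],[C2,0,C1,0]]
    Matrix.fromBlocks (Matrix.fromBlocks S 0 C5 G) 0
        (Matrix.fromBlocks 0 D C2 0) (Matrix.fromBlocks F C3 C1 0) := by
  simp [Matrix.fromBlocks_multiply, Matrix.mul_one, Matrix.one_mul]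
end

section
/- Let the fluid matrix F be given in 2×2 block form F = [[F_II, F_IΓ],[F_ΓI, F_ΓΓ]] with respect to interior indices (size n_I) and interface indices (size n_Γ), over ℝ, let C1 = [0, Id] be the n_Γ×(n_I+n_Γ) matrix selecting the interface components, and C3 = C1ᵀ. Then the (n_I+n_Γ+n_Γ)×(n_I+n_Γ+n_Γ) saddle-point matrix [[F, C3],[C1, 0]] is invertible if and only if the interior block F_II is invertible. -/
open Matrix

private lemma fromRows_add' {R : Type*} [Add R] {m₁ m₂ n : Type*}
    (A₁ B₁ : Matrix m₁ n R) (A₂ B₂ : Matrix m₂ n R) :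
    Matrix.fromRows A₁ A₂ + Matrix.fromRows B₁ B₂ = Matrix.fromRows (A₁ + B₁) (A₂ + B₂) := by
  ext (i | i) j <;> simp [Matrix.fromRows_apply_inl, Matrix.fromRows_apply_inr]

private lemma isUnit_of_right_inverse' {n : Type*} [Fintype n] [DecidableEq n]
    {A B : Matrix n n ℝ} (h : A * B = 1) : IsUnit A :=
  (Matrix.isUnit_iff_isUnit_det A).mpr (Matrix.isUnit_det_of_right_inverse h)

/-- With `C1 = [0, Id]` selecting the interface components and `C3 = C1ᵀ`,
the saddle-point matrix `[[F, C3],[C1, 0]]` is invertible if and only if the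
interior block `F_II` is invertible. -/
theorem facsi_saddle_point_invertible_iff
    (nI nΓ : ℕ)
    (FII : Matrix (Fin nI) (Fin nI) ℝ)
    (FIΓ : Matrix (Fin nI) (Fin nΓ) ℝ)
    (FΓI : Matrix (Fin nΓ) (Fin nI) ℝ)
    (FΓΓ : Matrix (Fin nΓ) (Fin nΓ) ℝ) :
    (let F : Matrix (Fin nI ⊕ Fin nΓ) (Fin nI ⊕ Fin nΓ) ℝ :=
      Matrix.fromBlocks FII FIΓ FΓI FΓΓ
    let C1 : Matrix (Fin nΓ) (Fin nI ⊕ Fin nΓ) ℝ := Matrix.fromCols 0 1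
    let C3 : Matrix (Fin nI ⊕ Fin nΓ) (Fin nΓ) ℝ := C1ᵀ
    IsUnit (Matrix.fromBlocks F C3 C1 0) ↔ IsUnit FII) := by
  intro F C1 C3
  have hF : F = Matrix.fromBlocks FII FIΓ FΓI FΓΓ := rfl
  have hC1 : C1 = Matrix.fromCols 0 1 := rfl
  have hC3 : C3 = Matrix.fromRows (0 : Matrix (Fin nI) (Fin nΓ) ℝ) 1 := by
    show (Matrix.fromCols 0 1)ᵀ = _
    rw [Matrix.transpose_fromCols, Matrix.transpose_zero, Matrix.transpose_one]
  constructor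
  · intro hM
    obtain ⟨N, h⟩ := hM.exists_right_inv
    rw [hF, hC1, hC3] at h
    -- interface-row entries of the top-left block of N vanish
    have hc : ∀ (γ : Fin nΓ) (j : Fin nI),
        N (Sum.inl (Sum.inr γ)) (Sum.inl (Sum.inl j)) = 0 := by
      intro γ j
      have h2 := Matrix.ext_iff.mpr h (Sum.inr γ) (Sum.inl (Sum.inl j))
      simpa [Matrix.mul_apply, Fintype.sum_sum_type, Matrix.fromBlocks,
        Matrix.fromCols, Matrix.fromRows, Matrix.fromRows_apply_inl, Matrix.fromRows_apply_inr,
        Matrix.fromCols_apply_inl, Matrix.fromCols_apply_inr, Matrix.one_apply] using h2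
    -- the interior block of N is a right inverse of FII
    have key : FII * (Matrix.of fun i j =>
        N (Sum.inl (Sum.inl i)) (Sum.inl (Sum.inl j))) = 1 := by
      ext i j
      have h2 := Matrix.ext_iff.mpr h (Sum.inl (Sum.inl i)) (Sum.inl (Sum.inl j))
      simp only [Matrix.mul_apply, Fintype.sum_sum_type, Matrix.fromBlocks,
        Matrix.fromRows_apply_inl, Matrix.fromRows_apply_inr,
        Matrix.fromCols_apply_inl, Matrix.fromCols_apply_inr, Matrix.of_apply, Sum.elim_inl,
        Sum.elim_inr, Matrix.one_apply, Matrix.zero_apply, zero_mul, mul_zero,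
        hc, Finset.sum_const_zero, add_zero, Sum.inl.injEq] at h2
      simpa [Matrix.mul_apply, Matrix.one_apply] using h2
    exact isUnit_of_right_inverse' key
  · intro hFII
    obtain ⟨g, hg1⟩ := hFII.exists_right_inv
    apply isUnit_of_right_inverse'
      (B := Matrix.fromBlocks (Matrix.fromBlocks g 0 0 0)
        (Matrix.fromRows (-(g * FIΓ)) 1)
        (Matrix.fromCols (-(FΓI * g)) 1)
        (FΓI * g * FIΓ - FΓΓ))
    rw [Matrix.fromBlocks_multiply, hC3]
    have e11 : F * (Matrix.fromBlocks g 0 0 0 : Matrix (Fin nI ⊕ Fin nΓ) (Fin nI ⊕ Fin nΓ) ℝ) +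
        Matrix.fromRows (0 : Matrix (Fin nI) (Fin nΓ) ℝ) 1 *
          Matrix.fromCols (-(FΓI * g)) (1 : Matrix (Fin nΓ) (Fin nΓ) ℝ) = 1 := by
      rw [hF]
      rw [Matrix.fromBlocks_multiply, Matrix.fromRows_mul_fromCols,
        Matrix.fromBlocks_add, ← Matrix.fromBlocks_one]
      congr 1 <;> simp [hg1]
    have e12 : F * Matrix.fromRows (-(g * FIΓ)) (1 : Matrix (Fin nΓ) (Fin nΓ) ℝ) +
        Matrix.fromRows (0 : Matrix (Fin nI) (Fin nΓ) ℝ) 1 *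
          (FΓI * g * FIΓ - FΓΓ) = 0 := by
      rw [hF]
      rw [Matrix.fromBlocks_mul_fromRows, Matrix.fromRows_mul, fromRows_add',
        ← Matrix.fromRows_zero (m₁ := Fin nI) (m₂ := Fin nΓ) (n := Fin nΓ) (R := ℝ)]
      have hX : FII * -(g * FIΓ) + FIΓ * (1 : Matrix (Fin nΓ) (Fin nΓ) ℝ) +
          (0 : Matrix (Fin nI) (Fin nΓ) ℝ) * (FΓI * g * FIΓ - FΓΓ) = 0 := by
        rw [Matrix.zero_mul, add_zero, Matrix.mul_neg, ← Matrix.mul_assoc, hg1,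
          Matrix.one_mul, Matrix.mul_one, neg_add_cancel]
      have hY : FΓI * -(g * FIΓ) + FΓΓ * (1 : Matrix (Fin nΓ) (Fin nΓ) ℝ) +
          (1 : Matrix (Fin nΓ) (Fin nΓ) ℝ) * (FΓI * g * FIΓ - FΓΓ) = 0 := by
        rw [Matrix.mul_neg, Matrix.mul_one, Matrix.one_mul, ← Matrix.mul_assoc]
        abel
      rw [hX, hY]
    have e21 : C1 * (Matrix.fromBlocks g 0 0 0 : Matrix (Fin nI ⊕ Fin nΓ) (Fin nI ⊕ Fin nΓ) ℝ) +
        (0 : Matrix (Fin nΓ) (Fin nΓ) ℝ) *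
          Matrix.fromCols (-(FΓI * g)) (1 : Matrix (Fin nΓ) (Fin nΓ) ℝ) = 0 := by
      rw [hC1, Matrix.fromCols_mul_fromBlocks]
      simp
    have e22 : C1 * Matrix.fromRows (-(g * FIΓ)) (1 : Matrix (Fin nΓ) (Fin nΓ) ℝ) +
        (0 : Matrix (Fin nΓ) (Fin nΓ) ℝ) * (FΓI * g * FIΓ - FΓΓ) = 1 := by
      rw [hC1]
      rw [Matrix.fromCols_mul_fromRows, Matrix.zero_mul, Matrix.zero_mul,
        Matrix.one_mul, zero_add, add_zero]
    rw [e11, e12, e21, e22, Matrix.fromBlocks_one]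
end

section
/- Let S be an invertible n_s×n_s real matrix, G an invertible n_g×n_g real matrix, and let the fluid matrix F = [[F_II, F_IΓ],[F_ΓI, F_ΓΓ]] be an n_f×n_f real matrix (n_f = n_I + n_Γ) in 2×2 block form with respect to interior and interface indices, with F_II invertible. Let C1 = [0, Id] be the n_Γ×n_f matrix selecting the interface components, C3 = C1ᵀ, and let C2 (n_Γ×n_s), C5 (n_g×n_s), D (n_f×n_g) be arbitrary real matrices. Then the FaCSI preconditioner B_FaCSI = B_S · B_G · B_F, where B_S = [[S,0,0,0],[0,I,0,0],[0,0,I,0],[0,0,0,I]], B_G = [[I,0,0,0],[C5,G,0,0],[0,0,I,0],[0,0,0,I]], and B_F = [[I,0,0,0],[0,I,0,0],[0,D,F,C3],[C2,0,C1,0]], is an invertible matrix. -/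
open Matrix

/-- The saddle-point block `[[F, C1ᵀ],[C1, 0]]` with `C1 = [0, 1]` is invertible
whenever the interior block `FII` is invertible. -/
theorem facsi_saddle_isUnit {nI nΓ : ℕ}
    (FII : Matrix (Fin nI) (Fin nI) ℝ) (hFII : IsUnit FII)
    (FIΓ : Matrix (Fin nI) (Fin nΓ) ℝ)
    (FΓI : Matrix (Fin nΓ) (Fin nI) ℝ)
    (FΓΓ : Matrix (Fin nΓ) (Fin nΓ) ℝ) :
    IsUnit (Matrix.fromBlocks (Matrix.fromBlocks FII FIΓ FΓI FΓΓ)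
      (Matrix.fromCols (0 : Matrix (Fin nΓ) (Fin nI) ℝ) 1)ᵀ
      (Matrix.fromCols (0 : Matrix (Fin nΓ) (Fin nI) ℝ) 1) 0) := by
  have hdet : IsUnit FII.det := (Matrix.isUnit_iff_isUnit_det FII).mp hFII
  set K := FII⁻¹ with hKdef
  have hK1 : FII * K = 1 := Matrix.mul_nonsing_inv FII hdet
  have hK2 : K * FII = 1 := Matrix.nonsing_inv_mul FII hdet
  set A : Matrix (Fin nI ⊕ Fin nΓ) (Fin nI ⊕ Fin nΓ) ℝ := Matrix.fromBlocks K 0 0 0 with hA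
  set B : Matrix (Fin nI ⊕ Fin nΓ) (Fin nΓ) ℝ := Matrix.fromRows (-(K * FIΓ)) 1 with hB
  set C' : Matrix (Fin nΓ) (Fin nI ⊕ Fin nΓ) ℝ := Matrix.fromCols (-(FΓI * K)) 1 with hC
  set D' : Matrix (Fin nΓ) (Fin nΓ) ℝ := FΓI * K * FIΓ - FΓΓ with hD
  have hC3 : (Matrix.fromCols (0 : Matrix (Fin nΓ) (Fin nI) ℝ) 1)ᵀ
      = Matrix.fromRows (0 : Matrix (Fin nI) (Fin nΓ) ℝ) (1 : Matrix (Fin nΓ) (Fin nΓ) ℝ) := by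
    rw [Matrix.transpose_fromCols, Matrix.transpose_zero, Matrix.transpose_one]
  have key : Matrix.fromBlocks (Matrix.fromBlocks FII FIΓ FΓI FΓΓ)
      (Matrix.fromCols (0 : Matrix (Fin nΓ) (Fin nI) ℝ) 1)ᵀ
      (Matrix.fromCols (0 : Matrix (Fin nΓ) (Fin nI) ℝ) 1) 0
      * Matrix.fromBlocks A B C' D' = 1 := by
    rw [hC3, Matrix.fromBlocks_multiply, hA, hB, hC, hD]
    simp only [Matrix.fromBlocks_multiply, Matrix.fromRows_mul, Matrix.mul_fromCols,
      Matrix.fromCols_mul_fromRows, Matrix.fromCols_mul_fromBlocks,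
      Matrix.fromBlocks_mul_fromRows, Matrix.mul_zero, Matrix.zero_mul, Matrix.mul_one,
      Matrix.one_mul, Matrix.mul_neg, Matrix.neg_mul, add_zero, zero_add,
      ← Matrix.mul_assoc, hK1, hK2]
    ext ((i|i)|i) ((j|j)|j) <;>
      simp [Matrix.fromBlocks_apply₁₁, Matrix.fromBlocks_apply₁₂, Matrix.fromBlocks_apply₂₁,
        Matrix.fromBlocks_apply₂₂, Matrix.fromRows_apply_inl, Matrix.fromRows_apply_inr,
        Matrix.fromCols_apply_inl, Matrix.fromCols_apply_inr, Matrix.add_apply,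
        Matrix.neg_apply, Matrix.sub_apply, Matrix.one_apply, Matrix.mul_assoc]
  exact ⟨⟨_, _, key, mul_eq_one_comm.mp key⟩, rfl⟩

/-- If `S` and `G` are invertible and the interior fluid block `F_II` is
invertible, then the FaCSI preconditioner `B_FaCSI = B_S · B_G · B_F` is an
invertible matrix. Here the fluid block `F` lives on `Fin nI ⊕ Fin nΓ`,
`C1 = [0, Id]` selects the interface components, and `C3 = C1ᵀ`. -/
theorem facsi_preconditioner_invertible
    (ns ng nI nΓ : ℕ)
    (S : Matrix (Fin ns) (Fin ns) ℝ) (hS : IsUnit S)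
    (G : Matrix (Fin ng) (Fin ng) ℝ) (hG : IsUnit G)
    (FII : Matrix (Fin nI) (Fin nI) ℝ) (hFII : IsUnit FII)
    (FIΓ : Matrix (Fin nI) (Fin nΓ) ℝ)
    (FΓI : Matrix (Fin nΓ) (Fin nI) ℝ)
    (FΓΓ : Matrix (Fin nΓ) (Fin nΓ) ℝ)
    (C2 : Matrix (Fin nΓ) (Fin ns) ℝ)
    (C5 : Matrix (Fin ng) (Fin ns) ℝ)
    (D : Matrix (Fin nI ⊕ Fin nΓ) (Fin ng) ℝ) :
    (let F : Matrix (Fin nI ⊕ Fin nΓ) (Fin nI ⊕ Fin nΓ) ℝ :=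
      Matrix.fromBlocks FII FIΓ FΓI FΓΓ
    let C1 : Matrix (Fin nΓ) (Fin nI ⊕ Fin nΓ) ℝ := Matrix.fromCols 0 1
    let C3 : Matrix (Fin nI ⊕ Fin nΓ) (Fin nΓ) ℝ := C1ᵀ
    -- B_S = [[S,0,0,0],[0,I,0,0],[0,0,I,0],[0,0,0,I]]
    let BS := Matrix.fromBlocks (Matrix.fromBlocks S 0 0 1) 0 0
        (1 : Matrix ((Fin nI ⊕ Fin nΓ) ⊕ Fin nΓ) ((Fin nI ⊕ Fin nΓ) ⊕ Fin nΓ) ℝ)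
    -- B_G = [[I,0,0,0],[C5,G,0,0],[0,0,I,0],[0,0,0,I]]
    let BG := Matrix.fromBlocks (Matrix.fromBlocks 1 0 C5 G) 0 0
        (1 : Matrix ((Fin nI ⊕ Fin nΓ) ⊕ Fin nΓ) ((Fin nI ⊕ Fin nΓ) ⊕ Fin nΓ) ℝ)
    -- B_F = [[I,0,0,0],[0,I,0,0],[0,D,F,C3],[C2,0,C1,0]]
    let BF := Matrix.fromBlocks (1 : Matrix (Fin ns ⊕ Fin ng) (Fin ns ⊕ Fin ng) ℝ) 0
        (Matrix.fromBlocks 0 D C2 0) (Matrix.fromBlocks F C3 C1 0)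
    IsUnit (BS * BG * BF)) := by
  intro F C1 C3 BS BG BF
  have hBS : IsUnit BS := by
    rw [Matrix.isUnit_iff_isUnit_det]
    show IsUnit (Matrix.fromBlocks (Matrix.fromBlocks S 0 0 1) 0 0
        (1 : Matrix ((Fin nI ⊕ Fin nΓ) ⊕ Fin nΓ) ((Fin nI ⊕ Fin nΓ) ⊕ Fin nΓ) ℝ)).det
    rw [Matrix.det_fromBlocks_zero₁₂, Matrix.det_fromBlocks_zero₁₂]
    simpa using (Matrix.isUnit_iff_isUnit_det S).mp hS
  have hBG : IsUnit BG := by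
    rw [Matrix.isUnit_iff_isUnit_det]
    show IsUnit (Matrix.fromBlocks (Matrix.fromBlocks 1 0 C5 G) 0 0
        (1 : Matrix ((Fin nI ⊕ Fin nΓ) ⊕ Fin nΓ) ((Fin nI ⊕ Fin nΓ) ⊕ Fin nΓ) ℝ)).det
    rw [Matrix.det_fromBlocks_zero₁₂, Matrix.det_fromBlocks_zero₁₂]
    simpa using (Matrix.isUnit_iff_isUnit_det G).mp hG
  have hBF : IsUnit BF := by
    rw [Matrix.isUnit_iff_isUnit_det]
    show IsUnit (Matrix.fromBlocks (1 : Matrix (Fin ns ⊕ Fin ng) (Fin ns ⊕ Fin ng) ℝ) 0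
        (Matrix.fromBlocks 0 D C2 0) (Matrix.fromBlocks F C3 C1 0)).det
    rw [Matrix.det_fromBlocks_zero₁₂]
    have := (Matrix.isUnit_iff_isUnit_det _).mp
      (facsi_saddle_isUnit FII hFII FIΓ FΓI FΓΓ)
    simpa using this
  exact (hBS.mul hBG).mul hBF
end
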